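/- (Corollary: five-way characterization.) Let A be a fixed finite MTL-chain, P a predicate language, and T a set of P-sentences that has an A-model. The following are equivalent: (1) T is closed under weak A-direct products and homomorphisms; (2) T is closed under A-direct products and homomorphisms; (3) T is axiomatized by a set of ∧-primitive sentences; (4) T is axiomatized by a set of &-primitive sentences; (5) T is axiomatized by a set of positive-primitive (∧&-primitive) sentences. -/

import Mathlib

noncomputable section
open Classical

universe u

/-- A finite MTL-chain: a finite linearly ordered set with least and greatest
elements, a commutative monoid operation `*` with unit `1 = ⊤` that is monotone
in each argument, and the residuum determined by `a * b ≤ c ↔ a ≤ resid b c`. -/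
class MTLChain (A : Type u) extends Fintype A, LinearOrder A, CommMonoid A, BoundedOrder A where
  one_eq_top : (1 : A) = ⊤
  mul_mono : ∀ {a b : A}, a ≤ b → ∀ c : A, c * a ≤ c * b
  resid : A → A → A
  resid_galois : ∀ a b c : A, a * b ≤ c ↔ a ≤ resid b c

noncomputable instance MTLChain.toCompleteLinearOrder (A : Type u) [MTLChain A] :
    CompleteLinearOrder A :=
  Fintype.toCompleteLinearOrder A

/-- A predicate language: predicate symbols and function symbols, each with
a finite arity.  (Nullary predicates are truth constants, nullary functions
are individual constants.)  Crisp equality `≈` is built into formulas. -/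
structure Lang : Type (u + 1) where
  Pred : Type u
  predAr : Pred → ℕ
  Func : Type u
  funcAr : Func → ℕ

variable {A : Type u} [MTLChain A] {L : Lang.{u}}

/-- Terms of a predicate language, with variables indexed by `ℕ`. -/
inductive Term (L : Lang.{u}) : Type u where
  | var : ℕ → Term L
  | func (f : L.Func) (ts : Fin (L.funcAr f) → Term L) : Term L

/-- Formulas: atomic formulas (predicates applied to terms, and crisp equality),
strong conjunction `&`, weak conjunction `∧`, weak disjunction `∨`,
implication `→`, and the quantifiers. -/
inductive Formula (L : Lang.{u}) : Type u where
  | rel (P : L.Pred) (ts : Fin (L.predAr P) → Term L) : Formula L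
  | eq (t₁ t₂ : Term L) : Formula L
  | sconj (φ ψ : Formula L) : Formula L
  | wconj (φ ψ : Formula L) : Formula L
  | wdisj (φ ψ : Formula L) : Formula L
  | impl (φ ψ : Formula L) : Formula L
  | all (x : ℕ) (φ : Formula L) : Formula L
  | ex (x : ℕ) (φ : Formula L) : Formula L

/-- An `A`-structure for the language `L`: a nonempty domain, an `A`-valued
interpretation of each predicate symbol, and an interpretation of each
function symbol. -/
structure Structure (L : Lang.{u}) (A : Type u) [MTLChain A] : Type (u + 1) where
  Dom : Type u
  [dom_nonempty : Nonempty Dom]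
  funMap (f : L.Func) : (Fin (L.funcAr f) → Dom) → Dom
  relMap (P : L.Pred) : (Fin (L.predAr P) → Dom) → A

attribute [instance] Structure.dom_nonempty

/-- Value of a term under an evaluation of the variables. -/
def Term.val (M : Structure L A) (v : ℕ → M.Dom) : Term L → M.Dom
  | .var n => v n
  | .func f ts => M.funMap f fun i => (ts i).val M v

/-- Truth value of a formula in an `A`-structure under an evaluation of the
variables.  Equality is crisp, `&` is interpreted by `*`, `∧` by minimum,
`∨` by maximum, `→` by the residuum, `∀` by infimum (= minimum) and `∃` by
supremum (= maximum) over the domain. -/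
def Formula.val (M : Structure L A) : Formula L → (ℕ → M.Dom) → A
  | .rel P ts, v => M.relMap P fun i => (ts i).val M v
  | .eq t₁ t₂, v => if t₁.val M v = t₂.val M v then 1 else ⊥
  | .sconj φ ψ, v => φ.val M v * ψ.val M v
  | .wconj φ ψ, v => φ.val M v ⊓ ψ.val M v
  | .wdisj φ ψ, v => φ.val M v ⊔ ψ.val M v
  | .impl φ ψ, v => MTLChain.resid (φ.val M v) (ψ.val M v)
  | .all x φ, v => ⨅ a : M.Dom, φ.val M (Function.update v x a)
  | .ex x φ, v => ⨆ a : M.Dom, φ.val M (Function.update v x a)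

/-- Free variables of a term. -/
def Term.fvars : Term L → Set ℕ
  | .var n => {n}
  | .func _ ts => ⋃ i, (ts i).fvars

/-- Free variables of a formula. -/
def Formula.fvars : Formula L → Set ℕ
  | .rel _ ts => ⋃ i, (ts i).fvars
  | .eq t₁ t₂ => t₁.fvars ∪ t₂.fvars
  | .sconj φ ψ => φ.fvars ∪ ψ.fvars
  | .wconj φ ψ => φ.fvars ∪ ψ.fvars
  | .wdisj φ ψ => φ.fvars ∪ ψ.fvars
  | .impl φ ψ => φ.fvars ∪ ψ.fvars
  | .all x φ => φ.fvars \ {x}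
  | .ex x φ => φ.fvars \ {x}

/-- A sentence is a formula with no free variables. -/
def Formula.IsSentence (φ : Formula L) : Prop := φ.fvars = ∅

/-- `φ` is valid in `M` (i.e. `‖φ‖_M = 1`). -/
def Valid (M : Structure L A) (φ : Formula L) : Prop :=
  ∀ v : ℕ → M.Dom, φ.val M v = 1

/-- `M` is an `A`-model of the set of sentences `T`. -/
def Models (M : Structure L A) (T : Set (Formula L)) : Prop :=
  ∀ φ ∈ T, Valid M φ

/-- Two structures are elementarily equivalent if the same sentences are valid
in both (i.e. they have the same theory). -/
def ElemEquiv (M N : Structure L A) : Prop :=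
  ∀ φ : Formula L, φ.IsSentence → (Valid M φ ↔ Valid N φ)

/-- `g : M → N` is a homomorphism of `A`-structures: it commutes with the
interpretation of function symbols, and preserves truth (value `1`) of
atomic predicates. -/
structure IsHom (M N : Structure L A) (g : M.Dom → N.Dom) : Prop where
  map_fun : ∀ (f : L.Func) (d : Fin (L.funcAr f) → M.Dom),
    g (M.funMap f d) = N.funMap f (g ∘ d)
  map_rel : ∀ (P : L.Pred) (d : Fin (L.predAr P) → M.Dom),
    M.relMap P d = 1 → N.relMap P (g ∘ d) = 1

/-- Atomic formulas. -/
inductive IsAtomicFormula : Formula L → Prop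
  | rel (P : L.Pred) (ts : Fin (L.predAr P) → Term L) : IsAtomicFormula (.rel P ts)
  | eq (t₁ t₂ : Term L) : IsAtomicFormula (.eq t₁ t₂)

/-- Quantifier-free formulas built from atomic formulas using only `∧` and `&`. -/
inductive QFConj : Formula L → Prop
  | atom {φ : Formula L} : IsAtomicFormula φ → QFConj φ
  | sconj {φ ψ : Formula L} : QFConj φ → QFConj ψ → QFConj (.sconj φ ψ)
  | wconj {φ ψ : Formula L} : QFConj φ → QFConj ψ → QFConj (.wconj φ ψ)

/-- Quantifier-free formulas built from atomic formulas using only `∧`. -/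
inductive QFWConj : Formula L → Prop
  | atom {φ : Formula L} : IsAtomicFormula φ → QFWConj φ
  | wconj {φ ψ : Formula L} : QFWConj φ → QFWConj ψ → QFWConj (.wconj φ ψ)

/-- Quantifier-free formulas built from atomic formulas using only `&`. -/
inductive QFSConj : Formula L → Prop
  | atom {φ : Formula L} : IsAtomicFormula φ → QFSConj φ
  | sconj {φ ψ : Formula L} : QFSConj φ → QFSConj ψ → QFSConj (.sconj φ ψ)

/-- Quantifier-free formulas built from atomic formulas using only `∧`, `∨` and `&`. -/
inductive QFPos : Formula L → Prop
  | atom {φ : Formula L} : IsAtomicFormula φ → QFPos φ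
  | sconj {φ ψ : Formula L} : QFPos φ → QFPos ψ → QFPos (.sconj φ ψ)
  | wconj {φ ψ : Formula L} : QFPos φ → QFPos ψ → QFPos (.wconj φ ψ)
  | wdisj {φ ψ : Formula L} : QFPos φ → QFPos ψ → QFPos (.wdisj φ ψ)

/-- Positive-primitive (∧&-primitive) formulas: `(∃ x̄) ψ` with `ψ`
quantifier-free built from atomic formulas using only `∧` and `&`. -/
inductive IsPP : Formula L → Prop
  | base {φ : Formula L} : QFConj φ → IsPP φ
  | ex {φ : Formula L} (x : ℕ) : IsPP φ → IsPP (.ex x φ)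

/-- ∧-primitive formulas. -/
inductive IsWPrimitive : Formula L → Prop
  | base {φ : Formula L} : QFWConj φ → IsWPrimitive φ
  | ex {φ : Formula L} (x : ℕ) : IsWPrimitive φ → IsWPrimitive (.ex x φ)

/-- &-primitive formulas. -/
inductive IsSPrimitive : Formula L → Prop
  | base {φ : Formula L} : QFSConj φ → IsSPrimitive φ
  | ex {φ : Formula L} (x : ℕ) : IsSPrimitive φ → IsSPrimitive (.ex x φ)

/-- Existential positive formulas: `(∃ x̄) ψ` with `ψ` quantifier-free built
from atomic formulas using only `∧`, `∨` and `&`. -/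
inductive IsExPos : Formula L → Prop
  | base {φ : Formula L} : QFPos φ → IsExPos φ
  | ex {φ : Formula L} (x : ℕ) : IsExPos φ → IsExPos (.ex x φ)

/-- The `A`-direct product of a nonempty family of `A`-structures:
cartesian product domain, coordinatewise interpretation of function symbols,
and predicates interpreted by the minimum of the coordinatewise values. -/
def dirProd {I : Type u} [Nonempty I] (Ms : I → Structure L A) : Structure L A where
  Dom := ∀ i, (Ms i).Dom
  funMap f d := fun i => (Ms i).funMap f fun k => d k i
  relMap P d := ⨅ i, (Ms i).relMap P fun k => d k i

/-- The data of a weak `A`-direct product of a family of `A`-structures: an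
interpretation of the predicate symbols on the cartesian product taking value
`1` exactly when all the coordinatewise values are `1`. -/
structure WeakProdData {I : Type u} (Ms : I → Structure L A) : Type u where
  relMap (P : L.Pred) : (Fin (L.predAr P) → ∀ i, (Ms i).Dom) → A
  rel_one_iff : ∀ (P : L.Pred) (d : Fin (L.predAr P) → ∀ i, (Ms i).Dom),
    relMap P d = 1 ↔ ∀ i, (Ms i).relMap P (fun k => d k i) = 1

/-- The weak `A`-direct product structure determined by such data. -/
def WeakProdData.toStructure {I : Type u} [Nonempty I] {Ms : I → Structure L A}
    (W : WeakProdData Ms) : Structure L A where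
  Dom := ∀ i, (Ms i).Dom
  funMap f d := fun i => (Ms i).funMap f fun k => d k i
  relMap := W.relMap

/-!
Value `1` of a positive-primitive formula is computed classically, since `a * b = 1` and
`a ⊓ b = 1` both mean `a = b = 1` in an MTL-chain. Hence pp sentences are preserved by
homomorphisms and weak products, and `∧` may be traded for `&` inside them.

Conversely, let `N` satisfy every ∧-primitive consequence of `T`. A product of models of `T`,
one refuting each ∧-primitive sentence that fails in `N`, is a model `M` of `T` whose
∧-primitive sentences all hold in `N`. A finite part of the positive diagram of `M` is such a
sentence, so it can be realized in `N`; gluing these finite realizations along an ultrafilter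
maps `M` homomorphically into an ultrapower of `N`. The ultrapower is therefore a model of `T`,
and so is `N` by Łoś's theorem.
-/

theorem exists_eq_iSup_of_finite_codomain {β : Type*} {ι : Sort*} [CompleteLinearOrder β]
    [Finite β] [Nonempty ι] (f : ι → β) : ∃ i, f i = ⨆ i, f i :=
  (Set.range_nonempty f).csSup_mem (Set.toFinite _)

namespace MTLChain

theorem le_one (a : A) : a ≤ 1 := one_eq_top (A := A) ▸ le_top

theorem mul_eq_one_iff {a b : A} : a * b = 1 ↔ a = 1 ∧ b = 1 := by
  refine ⟨fun h => ⟨le_antisymm (le_one a) ?_, le_antisymm (le_one b) ?_⟩, fun h => by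
    rw [h.1, h.2, one_mul]⟩
  · simpa [h] using mul_mono (le_one b) a
  · simpa [h, mul_comm b a] using mul_mono (le_one a) b

theorem inf_eq_one_iff {a b : A} : a ⊓ b = 1 ↔ a = 1 ∧ b = 1 := by
  simp only [one_eq_top, inf_eq_top_iff]

theorem iInf_eq_one_iff {ι : Sort*} (f : ι → A) : ⨅ i, f i = 1 ↔ ∀ i, f i = 1 := by
  simp only [one_eq_top, iInf_eq_top]

theorem iSup_eq_one_iff {ι : Sort*} [Nonempty ι] (f : ι → A) :
    ⨆ i, f i = 1 ↔ ∃ i, f i = 1 := by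
  refine ⟨fun h => ?_, fun ⟨i, hi⟩ => le_antisymm (le_one _) (hi ▸ le_iSup f i)⟩
  obtain ⟨i, hi⟩ := exists_eq_iSup_of_finite_codomain f
  exact ⟨i, hi.trans h⟩

end MTLChain

namespace Formula

variable {M : Structure L A} {v : ℕ → M.Dom}

@[simp]
theorem val_eq_eq_one {t₁ t₂ : Term L} :
    (eq t₁ t₂).val M v = 1 ↔ (t₁.val M v ≠ t₂.val M v → (⊥ : A) = 1) :=
  ite_eq_left_iff

@[simp]
theorem val_sconj_eq_one {φ ψ : Formula L} :
    (sconj φ ψ).val M v = 1 ↔ φ.val M v = 1 ∧ ψ.val M v = 1 :=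
  MTLChain.mul_eq_one_iff

@[simp]
theorem val_wconj_eq_one {φ ψ : Formula L} :
    (wconj φ ψ).val M v = 1 ↔ φ.val M v = 1 ∧ ψ.val M v = 1 :=
  MTLChain.inf_eq_one_iff

@[simp]
theorem val_ex_eq_one {x : ℕ} {φ : Formula L} :
    (ex x φ).val M v = 1 ↔ ∃ a, φ.val M (Function.update v x a) = 1 :=
  MTLChain.iSup_eq_one_iff _

theorem _root_.Term.val_congr (t : Term L) {v w : ℕ → M.Dom} (h : ∀ n ∈ t.fvars, v n = w n) :
    t.val M v = t.val M w := by
  induction t with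
  | var n => exact h n rfl
  | func f ts ih =>
    simp only [Term.fvars, Set.mem_iUnion] at h
    simp only [Term.val, fun i => ih i fun n hn => h n ⟨i, hn⟩]

theorem val_congr (φ : Formula L) {v w : ℕ → M.Dom} (h : ∀ n ∈ φ.fvars, v n = w n) :
    φ.val M v = φ.val M w := by
  induction φ generalizing v w with
  | rel P ts =>
    simp only [fvars, Set.mem_iUnion] at h
    simp only [val, fun i => (ts i).val_congr fun n hn => h n ⟨i, hn⟩]
  | eq t₁ t₂ =>
    simp only [fvars, Set.mem_union] at h
    simp only [val, t₁.val_congr fun n hn => h n (.inl hn), t₂.val_congr fun n hn => h n (.inr hn)]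
  | sconj φ ψ ih₁ ih₂ | wconj φ ψ ih₁ ih₂ | wdisj φ ψ ih₁ ih₂ | impl φ ψ ih₁ ih₂ =>
    simp only [fvars, Set.mem_union] at h
    simp only [val, ih₁ fun n hn => h n (.inl hn), ih₂ fun n hn => h n (.inr hn)]
  | all x φ ih | ex x φ ih =>
    simp only [val]
    congr! 2 with a
    refine ih fun n hn => ?_
    rcases eq_or_ne n x with rfl | hx
    · simp
    · simpa [hx] using h n ⟨hn, hx⟩

theorem IsSentence.valid_of_val_eq_one {φ : Formula L} (hφ : φ.IsSentence) (v : ℕ → M.Dom)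
    (h : φ.val M v = 1) : Valid M φ := fun w =>
  (φ.val_congr (v := w) (w := v) fun n hn => by simp [show φ.fvars = ∅ from hφ] at hn).trans h

end Formula

@[elab_as_elim]
theorem IsPP.induction {motive : Formula L → Prop}
    (atom : ∀ φ, IsAtomicFormula φ → motive φ)
    (sconj : ∀ φ ψ, motive φ → motive ψ → motive (.sconj φ ψ))
    (wconj : ∀ φ ψ, motive φ → motive ψ → motive (.wconj φ ψ))
    (ex : ∀ x φ, motive φ → motive (.ex x φ)) {φ : Formula L} (hφ : IsPP φ) : motive φ := by
  induction hφ with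
  | base hq =>
    induction hq with
    | atom ha => exact atom _ ha
    | sconj _ _ ih₁ ih₂ => exact sconj _ _ ih₁ ih₂
    | wconj _ _ ih₁ ih₂ => exact wconj _ _ ih₁ ih₂
  | ex x _ ih => exact ex x _ ih

theorem IsWPrimitive.isPP {φ : Formula L} (h : IsWPrimitive φ) : IsPP φ := by
  induction h with
  | base hq =>
    refine .base ?_
    induction hq with
    | atom ha => exact .atom ha
    | wconj _ _ ih₁ ih₂ => exact .wconj ih₁ ih₂
  | ex x _ ih => exact .ex x ih

theorem IsSPrimitive.isPP {φ : Formula L} (h : IsSPrimitive φ) : IsPP φ := by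
  induction h with
  | base hq =>
    refine .base ?_
    induction hq with
    | atom ha => exact .atom ha
    | sconj _ _ ih₁ ih₂ => exact .sconj ih₁ ih₂
  | ex x _ ih => exact .ex x ih

namespace IsHom

variable {M N : Structure L A} {g : M.Dom → N.Dom}

theorem term_val (hg : IsHom M N g) (t : Term L) (v : ℕ → M.Dom) :
    t.val N (g ∘ v) = g (t.val M v) := by
  induction t with
  | var n => rfl
  | func f ts ih =>
    simp only [Term.val, hg.map_fun]
    exact congrArg _ (funext ih)

theorem val_eq_one_of_isPP (hg : IsHom M N g) {φ : Formula L} (hφ : IsPP φ) :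
    ∀ v, φ.val M v = 1 → φ.val N (g ∘ v) = 1 := by
  refine IsPP.induction (fun φ hφ => ?_) (fun φ ψ ih₁ ih₂ v => ?_) (fun φ ψ ih₁ ih₂ v => ?_)
    (fun x φ ih v => ?_) hφ
  · rcases hφ with ⟨P, ts⟩ | ⟨t₁, t₂⟩
    · exact fun v h =>
        (congrArg (N.relMap P) (funext fun i => hg.term_val (ts i) v)).trans (hg.map_rel P _ h)
    · simp only [Formula.val_eq_eq_one, hg.term_val]
      exact fun v h hne => h (mt (congrArg g) hne)
  · simpa only [Formula.val_sconj_eq_one] using And.imp (ih₁ v) (ih₂ v)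
  · simpa only [Formula.val_wconj_eq_one] using And.imp (ih₁ v) (ih₂ v)
  · simp only [Formula.val_ex_eq_one]
    exact fun ⟨a, ha⟩ => ⟨g a, Function.comp_update g v x a ▸ ih _ ha⟩

theorem valid_of_isPP (hg : IsHom M N g) {φ : Formula L} (hφ : IsPP φ) (hs : φ.IsSentence)
    (h : Valid M φ) : Valid N φ :=
  let v : ℕ → M.Dom := fun _ => Classical.arbitrary _
  hs.valid_of_val_eq_one _ (hg.val_eq_one_of_isPP hφ v (h v))

end IsHom

namespace WeakProdData

variable {I : Type u} [Nonempty I] {Ms : I → Structure L A} (W : WeakProdData Ms)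

theorem term_val (t : Term L) (v : ℕ → W.toStructure.Dom) (i : I) :
    t.val W.toStructure v i = t.val (Ms i) (fun n => v n i) := by
  induction t with
  | var n => rfl
  | func f ts ih => simp only [Term.val, ← ih]; rfl

theorem val_eq_one_of_isPP {φ : Formula L} (hφ : IsPP φ) :
    ∀ v, (∀ i, φ.val (Ms i) (fun n => v n i) = 1) → φ.val W.toStructure v = 1 := by
  refine IsPP.induction (fun φ hφ => ?_) (fun φ ψ ih₁ ih₂ v => ?_) (fun φ ψ ih₁ ih₂ v => ?_)
    (fun x φ ih v => ?_) hφ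
  · rcases hφ with ⟨P, ts⟩ | ⟨t₁, t₂⟩
    · intro v h
      refine (W.rel_one_iff P _).2 fun i => ?_
      simp only [W.term_val]
      exact h i
    · simp only [Formula.val_eq_eq_one]
      intro v h hne
      obtain ⟨i, hi⟩ := Function.ne_iff.1 hne
      exact h i (by simpa only [W.term_val] using hi)
  · intro h
    simp only [Formula.val_sconj_eq_one, forall_and] at h ⊢
    exact ⟨ih₁ v h.1, ih₂ v h.2⟩
  · intro h
    simp only [Formula.val_wconj_eq_one, forall_and] at h ⊢
    exact ⟨ih₁ v h.1, ih₂ v h.2⟩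
  · simp only [Formula.val_ex_eq_one]
    intro h
    choose a ha using h
    refine ⟨a, ih _ fun i => ?_⟩
    convert ha i using 2
    exact funext fun n => Function.apply_update (fun _ d => d i) v x a n

theorem valid_of_isPP {φ : Formula L} (hφ : IsPP φ) (h : ∀ i, Valid (Ms i) φ) :
    Valid W.toStructure φ :=
  fun v => W.val_eq_one_of_isPP hφ v fun i => h i _

variable (Ms) in
def ofDirProd : WeakProdData Ms where
  relMap P d := ⨅ i, (Ms i).relMap P fun k => d k i
  rel_one_iff _ _ := MTLChain.iInf_eq_one_iff _

variable (Ms) in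
theorem toStructure_ofDirProd : (ofDirProd Ms).toStructure = dirProd Ms := rfl

end WeakProdData

theorem isHom_dirProd_eval {I : Type u} [Nonempty I] (Ms : I → Structure L A) (j : I) :
    IsHom (dirProd Ms) (Ms j) (fun d => d j) where
  map_fun _ _ := rfl
  map_rel _ _ h := (MTLChain.iInf_eq_one_iff _).1 h j

namespace Formula

def wconjToSconj : Formula L → Formula L
  | rel P ts => rel P ts
  | eq t₁ t₂ => eq t₁ t₂
  | sconj φ ψ => sconj φ.wconjToSconj ψ.wconjToSconj
  | wconj φ ψ => sconj φ.wconjToSconj ψ.wconjToSconj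
  | wdisj φ ψ => wdisj φ.wconjToSconj ψ.wconjToSconj
  | impl φ ψ => impl φ.wconjToSconj ψ.wconjToSconj
  | all x φ => all x φ.wconjToSconj
  | ex x φ => ex x φ.wconjToSconj

@[simp]
theorem fvars_wconjToSconj (φ : Formula L) : φ.wconjToSconj.fvars = φ.fvars := by
  induction φ <;> simp_all [wconjToSconj, fvars]

theorem IsSentence.wconjToSconj {φ : Formula L} (h : φ.IsSentence) :
    φ.wconjToSconj.IsSentence :=
  (fvars_wconjToSconj φ).trans h

end Formula

theorem IsPP.isSPrimitive_wconjToSconj {φ : Formula L} (h : IsPP φ) :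
    IsSPrimitive φ.wconjToSconj := by
  induction h with
  | base hq =>
    refine .base ?_
    induction hq with
    | atom ha => rcases ha with ⟨P, ts⟩ | ⟨t₁, t₂⟩ <;> exact .atom (by constructor)
    | sconj _ _ ih₁ ih₂ | wconj _ _ ih₁ ih₂ => exact .sconj ih₁ ih₂
  | ex x _ ih => exact .ex x ih

theorem IsPP.valid_wconjToSconj_iff {M : Structure L A} {φ : Formula L} (h : IsPP φ) :
    Valid M φ.wconjToSconj ↔ Valid M φ := by
  suffices ∀ v, φ.wconjToSconj.val M v = 1 ↔ φ.val M v = 1 from forall_congr' this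
  refine IsPP.induction (fun φ hφ v => ?_) (fun φ ψ ih₁ ih₂ v => ?_) (fun φ ψ ih₁ ih₂ v => ?_)
    (fun x φ ih v => ?_) h
  · rcases hφ with ⟨P, ts⟩ | ⟨t₁, t₂⟩ <;> rfl
  · simp only [Formula.wconjToSconj, Formula.val_sconj_eq_one, ih₁, ih₂]
  · simp only [Formula.wconjToSconj, Formula.val_sconj_eq_one, Formula.val_wconj_eq_one, ih₁, ih₂]
  · simp only [Formula.wconjToSconj, Formula.val_ex_eq_one, ih]

namespace Ultrafilter

variable {I : Type u} (U : Ultrafilter I) {β : Type*} [Finite β]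

def ulim (f : I → β) : β := (U.map f).eq_pure_of_finite.choose

variable {U}

theorem ulim_eq_iff {f : I → β} {b : β} : U.ulim f = b ↔ ∀ᶠ i in U, f i = b := by
  have hpure : U.map f = pure (U.ulim f) := (U.map f).eq_pure_of_finite.choose_spec
  have : ({b} : Set β) ∈ U.map f ↔ ∀ᶠ i in U, f i = b := Iff.rfl
  rw [← this, hpure, mem_pure, Set.mem_singleton_iff]

theorem eventually_eq_ulim (f : I → β) : ∀ᶠ i in U, f i = U.ulim f :=
  ulim_eq_iff.1 rfl

theorem ulim_congr {f g : I → β} (h : ∀ᶠ i in U, f i = g i) : U.ulim f = U.ulim g :=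
  ulim_eq_iff.2 <| (h.and (eventually_eq_ulim g)).mono fun _ hi => hi.1.trans hi.2

@[simp]
theorem ulim_const (b : β) : U.ulim (fun _ => b) = b :=
  ulim_eq_iff.2 (.of_forall fun _ => rfl)

theorem ulim_map₂ {γ : Type*} [Finite γ] (op : γ → γ → β) (f g : I → γ) :
    U.ulim (fun i => op (f i) (g i)) = op (U.ulim f) (U.ulim g) :=
  ulim_eq_iff.2 <| ((eventually_eq_ulim f).and (eventually_eq_ulim g)).mono fun _ hi => by
    rw [hi.1, hi.2]

theorem ulim_ite (p : I → Prop) [DecidablePred p] [Decidable (∀ᶠ i in U, p i)] (a b : β) :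
    U.ulim (fun i => if p i then a else b) = if ∀ᶠ i in U, p i then a else b := by
  split_ifs with h
  · exact ulim_eq_iff.2 (h.mono fun i hi => if_pos hi)
  · exact ulim_eq_iff.2 ((U.eventually_not.2 h).mono fun i hi => if_neg hi)

theorem ulim_mono [Preorder β] {f g : I → β} (h : ∀ i, f i ≤ g i) : U.ulim f ≤ U.ulim g := by
  obtain ⟨i, hf, hg⟩ := ((eventually_eq_ulim f).and (eventually_eq_ulim g)).exists
  exact hf ▸ hg ▸ h i

/-- Quantifiers commute with ultralimits because a supremum over a finite chain is attained. -/
theorem iSup_eq_ulim {α X : Type*} [CompleteLinearOrder β] [Nonempty α] {mk : (I → α) → X}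
    (hmk : mk.Surjective) {F : X → β} {G : I → α → β}
    (hF : ∀ u, F (mk u) = U.ulim fun i => G i (u i)) :
    ⨆ a, F a = U.ulim fun i => ⨆ b, G i b := by
  apply le_antisymm
  · refine iSup_le fun a => ?_
    obtain ⟨u, rfl⟩ := hmk a
    rw [hF]
    exact ulim_mono fun i => le_iSup (G i) (u i)
  · choose b hb using fun i => exists_eq_iSup_of_finite_codomain (G i)
    calc U.ulim (fun i => ⨆ b, G i b) = U.ulim fun i => G i (b i) :=
          ulim_congr (.of_forall fun i => (hb i).symm)
      _ = F (mk b) := (hF b).symm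
      _ ≤ ⨆ a, F a := le_iSup F _

theorem iInf_eq_ulim {α X : Type*} [CompleteLinearOrder β] [Nonempty α] {mk : (I → α) → X}
    (hmk : mk.Surjective) {F : X → β} {G : I → α → β}
    (hF : ∀ u, F (mk u) = U.ulim fun i => G i (u i)) :
    ⨅ a, F a = U.ulim fun i => ⨅ b, G i b :=
  iSup_eq_ulim (β := βᵒᵈ) hmk hF

end Ultrafilter

section Ultrapower

open Filter Ultrafilter

variable {I : Type u} (U : Ultrafilter I) (N : Structure L A)

def ultrapower : Structure L A where
  Dom := (U : Filter I).Germ N.Dom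
  dom_nonempty := ⟨↑(fun _ : I => Classical.arbitrary N.Dom)⟩
  funMap f d := ↑(fun i => N.funMap f fun k => Quotient.out (d k) i)
  relMap P d := U.ulim fun i => N.relMap P fun k => Quotient.out (d k) i

variable {N}

def ultrapowerMk (u : I → N.Dom) : (ultrapower U N).Dom := (u : (U : Filter I).Germ N.Dom)

variable {U}

theorem ultrapowerMk_eq_iff {u w : I → N.Dom} :
    ultrapowerMk U u = ultrapowerMk U w ↔ ∀ᶠ i in U, u i = w i :=
  Germ.coe_eq

theorem ultrapowerMk_out (a : (ultrapower U N).Dom) : ultrapowerMk U (Quotient.out a) = a :=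
  Quotient.out_eq a

theorem ultrapowerMk_surjective : (ultrapowerMk U : (I → N.Dom) → _).Surjective :=
  fun a => ⟨_, ultrapowerMk_out a⟩

theorem eventually_out_eq {n : ℕ} {d : Fin n → (ultrapower U N).Dom} {e : Fin n → I → N.Dom}
    (he : ∀ k, ultrapowerMk U (e k) = d k) :
    ∀ᶠ i in U, (fun k => Quotient.out (d k) i) = fun k => e k i := by
  have : ∀ k, ∀ᶠ i in U, Quotient.out (d k) i = e k i := fun k =>
    ultrapowerMk_eq_iff.1 ((ultrapowerMk_out (d k)).trans (he k).symm)
  exact (eventually_all.2 this).mono fun _ hi => funext hi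

theorem ultrapower_funMap (f : L.Func) {d : Fin (L.funcAr f) → (ultrapower U N).Dom}
    {e : Fin (L.funcAr f) → I → N.Dom} (he : ∀ k, ultrapowerMk U (e k) = d k) :
    (ultrapower U N).funMap f d = ultrapowerMk U fun i => N.funMap f fun k => e k i :=
  ultrapowerMk_eq_iff.2 ((eventually_out_eq he).mono fun _ hi => congrArg (N.funMap f) hi)

theorem ultrapower_relMap (P : L.Pred) {d : Fin (L.predAr P) → (ultrapower U N).Dom}
    {e : Fin (L.predAr P) → I → N.Dom} (he : ∀ k, ultrapowerMk U (e k) = d k) :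
    (ultrapower U N).relMap P d = U.ulim fun i => N.relMap P fun k => e k i :=
  ulim_congr ((eventually_out_eq he).mono fun _ hi => congrArg (N.relMap P) hi)

theorem ultrapower_term_val (t : Term L) (v : ℕ → I → N.Dom) :
    t.val (ultrapower U N) (fun n => ultrapowerMk U (v n)) =
      ultrapowerMk U fun i => t.val N fun n => v n i := by
  induction t with
  | var n => rfl
  | func f ts ih => exact ultrapower_funMap f fun k => (ih k).symm

theorem ultrapower_val (φ : Formula L) (v : ℕ → I → N.Dom) :
    φ.val (ultrapower U N) (fun n => ultrapowerMk U (v n)) =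
      U.ulim fun i => φ.val N fun n => v n i := by
  induction φ generalizing v with
  | rel P ts => exact ultrapower_relMap P fun k => (ultrapower_term_val (ts k) v).symm
  | eq t₁ t₂ =>
    simp only [Formula.val, ultrapower_term_val, ultrapowerMk_eq_iff]
    exact (ulim_ite _ _ _).symm
  | sconj φ ψ ih₁ ih₂ | wconj φ ψ ih₁ ih₂ | wdisj φ ψ ih₁ ih₂ | impl φ ψ ih₁ ih₂ =>
    simp only [Formula.val, ih₁, ih₂]
    exact (ulim_map₂ _ _ _).symm
  | all x φ ih | ex x φ ih =>
    have key : ∀ u : I → N.Dom,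
        φ.val (ultrapower U N) (Function.update (fun n => ultrapowerMk U (v n)) x
          (ultrapowerMk U u)) =
          U.ulim fun i => φ.val N (Function.update (fun n => v n i) x (u i)) := fun u => by
      rw [← funext (Function.apply_update (fun _ => ultrapowerMk U) v x u), ih]
      exact ulim_congr (.of_forall fun i => by
        rw [← funext (Function.apply_update (fun _ f => f i) v x u)])
    simp only [Formula.val]
    first
      | exact iInf_eq_ulim ultrapowerMk_surjective key
      | exact iSup_eq_ulim ultrapowerMk_surjective key

theorem Valid.of_ultrapower {φ : Formula L} (h : Valid (ultrapower U N) φ) : Valid N φ :=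
  fun w => by simpa only [ultrapower_val, ulim_const] using h fun n => ultrapowerMk U fun _ => w n

end Ultrapower

namespace Formula

def wconjList (l : List (Formula L)) : Formula L :=
  l.foldr wconj (eq (.var 0) (.var 0))

theorem qfwconj_wconjList {l : List (Formula L)} (h : ∀ φ ∈ l, QFWConj φ) :
    QFWConj (wconjList l) := by
  induction l with
  | nil => exact .atom (.eq _ _)
  | cons φ l ih => exact .wconj (h φ (by simp)) (ih fun ψ hψ => h ψ (by simp [hψ]))

theorem val_wconjList_eq_one {M : Structure L A} {v : ℕ → M.Dom} {l : List (Formula L)} :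
    (wconjList l).val M v = 1 ↔ ∀ φ ∈ l, φ.val M v = 1 := by
  induction l with
  | nil => simp [wconjList]
  | cons φ l ih => simp [wconjList, ← ih]

theorem fvars_wconjList_subset {l : List (Formula L)} {S : Set ℕ} (h0 : 0 ∈ S)
    (h : ∀ φ ∈ l, φ.fvars ⊆ S) : (wconjList l).fvars ⊆ S := by
  induction l with
  | nil => simpa [wconjList, fvars, Term.fvars] using h0
  | cons φ l ih =>
    exact Set.union_subset (h φ (by simp)) (ih fun ψ hψ => h ψ (by simp [hψ]))

def exClosure : ℕ → Formula L → Formula L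
  | 0, φ => φ
  | n + 1, φ => exClosure n (ex n φ)

theorem _root_.IsWPrimitive.exClosure {φ : Formula L} (h : IsWPrimitive φ) (n : ℕ) :
    IsWPrimitive (exClosure n φ) := by
  induction n generalizing φ with
  | zero => exact h
  | succ n ih => exact ih (.ex n h)

theorem fvars_exClosure (n : ℕ) (φ : Formula L) :
    (exClosure n φ).fvars = φ.fvars \ Set.Iio n := by
  induction n generalizing φ with
  | zero => simp [exClosure]
  | succ n ih =>
    ext j
    simp only [exClosure, ih, fvars, Set.mem_sdiff, Set.mem_Iio, Set.mem_singleton_iff]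
    constructor
    · rintro ⟨⟨h, hn⟩, hlt⟩
      exact ⟨h, by omega⟩
    · rintro ⟨h, hlt⟩
      exact ⟨⟨h, by omega⟩, by omega⟩

theorem val_exClosure_eq_one {M : Structure L A} (n : ℕ) (φ : Formula L) (v : ℕ → M.Dom) :
    (exClosure n φ).val M v = 1 ↔ ∃ w, (∀ j, n ≤ j → w j = v j) ∧ φ.val M w = 1 := by
  induction n generalizing φ with
  | zero =>
    exact ⟨fun h => ⟨v, fun _ _ => rfl, h⟩, fun ⟨w, hw, h⟩ => funext (hw · (Nat.zero_le _)) ▸ h⟩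
  | succ n ih =>
    simp only [exClosure, ih, val_ex_eq_one]
    constructor
    · rintro ⟨w, hw, a, ha⟩
      exact ⟨Function.update w n a, fun j hj => by simp [show j ≠ n by omega, hw j (by omega)], ha⟩
    · rintro ⟨w, hw, h⟩
      refine ⟨Function.update w n (v n), fun j hj => ?_, w n, by simpa using h⟩
      rcases eq_or_ne j n with rfl | hjn
      · simp
      · simpa [hjn] using hw j (by omega)

theorem isSentence_exClosure {φ : Formula L} {n : ℕ} (h : φ.fvars ⊆ Set.Iio n) :
    (exClosure n φ).IsSentence :=
  (fvars_exClosure n φ).trans (Set.sdiff_eq_empty.2 h)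

theorem valid_exClosure_iff {M : Structure L A} {φ : Formula L} {n : ℕ}
    (h : φ.fvars ⊆ Set.Iio n) : Valid M (exClosure n φ) ↔ ∃ w, φ.val M w = 1 := by
  refine ⟨fun hv => ?_, fun ⟨w, hw⟩ v => (val_exClosure_eq_one n φ v).2 ?_⟩
  · obtain ⟨w, -, hw⟩ := (val_exClosure_eq_one n φ _).1 (hv fun _ => Classical.arbitrary _)
    exact ⟨w, hw⟩
  · refine ⟨fun j => if j < n then w j else v j, fun j hj => if_neg (by omega), ?_⟩
    rw [← hw]
    exact φ.val_congr fun j hj => if_pos (h hj)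

end Formula

/-- The positive diagram of `M`: the facts `P(d) = 1` and `f(d) = m` that homomorphisms
preserve. -/
inductive DiagramAtom (M : Structure L A) : Type u
  | rel (P : L.Pred) (d : Fin (L.predAr P) → M.Dom) (h : M.relMap P d = 1)
  | func (f : L.Func) (d : Fin (L.funcAr f) → M.Dom)

namespace DiagramAtom

variable {M N : Structure L A}

def HoldsUnder (g : M.Dom → N.Dom) : DiagramAtom M → Prop
  | rel P d _ => N.relMap P (g ∘ d) = 1
  | func f d => g (M.funMap f d) = N.funMap f (g ∘ d)

def elems : DiagramAtom M → Finset M.Dom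
  | rel _ d _ => Finset.univ.image d
  | func f d => insert (M.funMap f d) (Finset.univ.image d)

/-- The atom as a formula, reading the element `m` as the variable `x m`. -/
def formula (x : M.Dom → ℕ) : DiagramAtom M → Formula L
  | rel P d _ => .rel P fun k => .var (x (d k))
  | func f d => .eq (.func f fun k => .var (x (d k))) (.var (x (M.funMap f d)))

theorem isHom_of_forall {g : M.Dom → N.Dom} (h : ∀ r : DiagramAtom M, r.HoldsUnder g) :
    IsHom M N g where
  map_fun f d := h (func f d)
  map_rel P d hd := h (rel P d hd)

theorem holdsUnder_id (r : DiagramAtom M) : r.HoldsUnder id := by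
  cases r with
  | rel P d h => exact h
  | func f d => rfl

theorem holdsUnder_congr {r : DiagramAtom M} {g g' : M.Dom → N.Dom}
    (h : ∀ m ∈ r.elems, g m = g' m) : r.HoldsUnder g ↔ r.HoldsUnder g' := by
  have hd : ∀ {n} (d : Fin n → M.Dom), (∀ k, d k ∈ r.elems) → g ∘ d = g' ∘ d :=
    fun d hd => funext fun k => h _ (hd k)
  cases r with
  | rel P d _ => simp only [HoldsUnder, hd d fun k => by simp [elems]]
  | func f d =>
    simp only [HoldsUnder, hd d fun k => by simp [elems], h (M.funMap f d) (by simp [elems])]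

theorem qfwconj_formula (x : M.Dom → ℕ) (r : DiagramAtom M) : QFWConj (r.formula x) := by
  cases r <;> exact .atom (by constructor)

theorem fvars_formula_subset (x : M.Dom → ℕ) (r : DiagramAtom M) :
    (r.formula x).fvars ⊆ x '' r.elems := by
  cases r <;> simp [formula, elems, Formula.fvars, Term.fvars, Set.subset_def]

theorem val_formula_eq_one [Nontrivial A] (x : M.Dom → ℕ) (w : ℕ → N.Dom) (r : DiagramAtom M) :
    (r.formula x).val N w = 1 ↔ r.HoldsUnder (w ∘ x) := by
  cases r with
  | rel => rfl
  | func f d =>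
    have hbot : (⊥ : A) ≠ 1 := MTLChain.one_eq_top (A := A) ▸ bot_ne_top
    rw [formula, Formula.val_eq_eq_one]
    simp only [hbot, imp_false, not_not]
    exact eq_comm

theorem holdsUnder_ultrapowerMk {I : Type u} {U : Ultrafilter I} {r : DiagramAtom M}
    {g : I → M.Dom → N.Dom} (h : ∀ᶠ i in U, r.HoldsUnder (g i)) :
    r.HoldsUnder fun m => ultrapowerMk U fun i => g i m := by
  cases r with
  | rel P d _ =>
    exact (ultrapower_relMap P (e := fun k i => g i (d k)) fun _ => rfl).trans
      (Ultrafilter.ulim_eq_iff.2 h)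
  | func f d => exact (ultrapowerMk_eq_iff.2 h).trans (ultrapower_funMap f fun _ => rfl).symm

/-- A finite part of the positive diagram of `M` is an ∧-primitive sentence valid in `M`,
hence in `N`; its witnesses in `N` interpret the elements involved. -/
theorem exists_holdsUnder [Nontrivial A]
    (hMN : ∀ σ, IsWPrimitive σ → σ.IsSentence → Valid M σ → Valid N σ)
    (s : Finset (DiagramAtom M)) : ∃ g : M.Dom → N.Dom, ∀ r ∈ s, r.HoldsUnder g := by
  set E := s.biUnion elems
  obtain ⟨x, hxinj, hxlt⟩ : ∃ x : M.Dom → ℕ, Set.InjOn x E ∧ ∀ m ∈ E, x m < E.card :=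
    ⟨fun m => if h : m ∈ E then E.equivFin ⟨m, h⟩ else 0,
      fun m hm m' hm' h => by
        simp only [dif_pos (Finset.mem_coe.1 hm), dif_pos (Finset.mem_coe.1 hm')] at h
        exact congrArg Subtype.val (E.equivFin.injective (Fin.ext h)),
      fun m hm => by simp [hm]⟩
  set φ := Formula.wconjList (s.toList.map (formula x))
  have hφ : ∀ {K : Structure L A} (w : ℕ → K.Dom),
      φ.val K w = 1 ↔ ∀ r ∈ s, r.HoldsUnder (w ∘ x) := fun w => by
    simp [φ, Formula.val_wconjList_eq_one, val_formula_eq_one]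
  -- `+ 1` because the empty conjunction `x₀ ≈ x₀` mentions `x₀`.
  have hfv : φ.fvars ⊆ Set.Iio (E.card + 1) := by
    refine Formula.fvars_wconjList_subset (by simp) ?_
    simp only [List.mem_map, Finset.mem_toList]
    rintro _ ⟨r, hr, rfl⟩
    refine (fvars_formula_subset x r).trans ?_
    rintro _ ⟨m, hm, rfl⟩
    exact Nat.lt_succ_of_lt (hxlt m (Finset.mem_biUnion.2 ⟨r, hr, hm⟩))
  have hM : Valid M (Formula.exClosure (E.card + 1) φ) := by
    refine (Formula.valid_exClosure_iff hfv).2 ⟨Function.invFunOn x E, (hφ _).2 fun r hr => ?_⟩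
    refine (holdsUnder_congr fun m hm => ?_).2 (holdsUnder_id r)
    exact hxinj.leftInvOn_invFunOn (Finset.mem_biUnion.2 ⟨r, hr, hm⟩)
  have hσ := hMN _ ((IsWPrimitive.base (Formula.qfwconj_wconjList (by
    simp only [List.mem_map]
    rintro _ ⟨r, -, rfl⟩
    exact qfwconj_formula x r))).exClosure _) (Formula.isSentence_exClosure hfv) hM
  obtain ⟨w, hw⟩ := (Formula.valid_exClosure_iff hfv).1 hσ
  exact ⟨w ∘ x, (hφ w).1 hw⟩

end DiagramAtom

theorem exists_isHom_ultrapower {M N : Structure L A}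
    (h : ∀ s : Finset (DiagramAtom M), ∃ g : M.Dom → N.Dom, ∀ r ∈ s, r.HoldsUnder g) :
    ∃ (U : Ultrafilter (Finset (DiagramAtom M))) (g : M.Dom → (ultrapower U N).Dom),
      IsHom M (ultrapower U N) g := by
  choose g hg using h
  let U := Ultrafilter.of (Filter.atTop : Filter (Finset (DiagramAtom M)))
  refine ⟨U, fun m => ultrapowerMk U fun s => g s m,
    DiagramAtom.isHom_of_forall fun r => DiagramAtom.holdsUnder_ultrapowerMk ?_⟩
  have : ∀ᶠ s in Filter.atTop, r ∈ s :=
    (Filter.eventually_ge_atTop {r}).mono fun s hs => Finset.singleton_subset_iff.1 hs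
  exact Filter.Eventually.mono (Ultrafilter.of_le _ this) fun s hs => hg s r hs

section Axiomatization

variable {T : Set (Formula L)}

theorem exists_models_wprimitive_transfer
    (hprod : ∀ (I : Type u) [Nonempty I] (Ms : I → Structure L A),
      (∀ i, Models (Ms i) T) → Models (dirProd Ms) T)
    (hcons : ∃ M : Structure L A, Models M T) {N : Structure L A}
    (hN : ∀ σ, IsWPrimitive σ → σ.IsSentence →
      (∀ M : Structure L A, Models M T → Valid M σ) → Valid N σ) :
    ∃ M : Structure L A, Models M T ∧
      ∀ σ, IsWPrimitive σ → σ.IsSentence → Valid M σ → Valid N σ := by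
  obtain ⟨M₀, hM₀⟩ := hcons
  have : ∀ σ : {σ : Formula L // IsWPrimitive σ ∧ σ.IsSentence ∧ ¬Valid N σ},
      ∃ M : Structure L A, Models M T ∧ ¬Valid M σ := fun ⟨σ, hw, hs, hσ⟩ => by
    by_contra! h
    exact hσ (hN σ hw hs h)
  choose Ms hMs hfail using this
  -- `M₀` keeps the index set of the product nonempty.
  let Ms' : Option _ → Structure L A := fun o => o.elim M₀ Ms
  refine ⟨dirProd Ms', hprod _ Ms' fun o => ?_, fun σ hw hs hσ => by_contra fun hNσ => ?_⟩
  · cases o with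
    | none => exact hM₀
    | some σ => exact hMs σ
  · exact hfail ⟨σ, hw, hs, hNσ⟩
      ((isHom_dirProd_eval Ms' (some ⟨σ, hw, hs, hNσ⟩)).valid_of_isPP hw.isPP hs hσ)

theorem models_of_wprimitive_transfer [Nontrivial A]
    (hhom : ∀ (M N : Structure L A) (g : M.Dom → N.Dom), IsHom M N g → Models M T → Models N T)
    {M N : Structure L A} (hM : Models M T)
    (hMN : ∀ σ, IsWPrimitive σ → σ.IsSentence → Valid M σ → Valid N σ) : Models N T := by
  obtain ⟨U, g, hg⟩ := exists_isHom_ultrapower (DiagramAtom.exists_holdsUnder hMN)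
  exact fun σ hσ => (hhom M _ g hg hM σ hσ).of_ultrapower

theorem exists_wprimitive_axiomatization
    (hprod : ∀ (I : Type u) [Nonempty I] (Ms : I → Structure L A),
      (∀ i, Models (Ms i) T) → Models (dirProd Ms) T)
    (hhom : ∀ (M N : Structure L A) (g : M.Dom → N.Dom), IsHom M N g → Models M T → Models N T)
    (hcons : ∃ M : Structure L A, Models M T) :
    ∃ Sig : Set (Formula L), (∀ σ ∈ Sig, IsWPrimitive σ ∧ σ.IsSentence) ∧
      ∀ M : Structure L A, Models M T ↔ Models M Sig := by
  refine ⟨{σ | IsWPrimitive σ ∧ σ.IsSentence ∧ ∀ M, Models M T → Valid M σ},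
    fun σ hσ => ⟨hσ.1, hσ.2.1⟩, fun N => ⟨fun hN σ hσ => hσ.2.2 N hN, fun hN => ?_⟩⟩
  rcases subsingleton_or_nontrivial A with hA | hA
  · exact fun σ _ v => Subsingleton.elim _ _
  obtain ⟨M, hM, hMN⟩ :=
    exists_models_wprimitive_transfer hprod hcons fun σ hw hs h => hN σ ⟨hw, hs, h⟩
  exact models_of_wprimitive_transfer hhom hM hMN

end Axiomatization

theorem pp_axiomatization_tfae_general {A : Type u} [MTLChain A] {L : Lang.{u}}
    (T : Set (Formula L))
    (hcons : ∃ M : Structure L A, Models M T) :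
    [((∀ (I : Type u) [Nonempty I] (Ms : I → Structure L A),
          (∀ i, Models (Ms i) T) → ∀ W : WeakProdData Ms, Models W.toStructure T) ∧
       (∀ (M N : Structure L A) (g : M.Dom → N.Dom),
          IsHom M N g → Models M T → Models N T)),
     ((∀ (I : Type u) [Nonempty I] (Ms : I → Structure L A),
          (∀ i, Models (Ms i) T) → Models (dirProd Ms) T) ∧
       (∀ (M N : Structure L A) (g : M.Dom → N.Dom),
          IsHom M N g → Models M T → Models N T)),
     (∃ Sig : Set (Formula L), (∀ σ ∈ Sig, IsWPrimitive σ ∧ σ.IsSentence) ∧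
        ∀ M : Structure L A, Models M T ↔ Models M Sig),
     (∃ Sig : Set (Formula L), (∀ σ ∈ Sig, IsSPrimitive σ ∧ σ.IsSentence) ∧
        ∀ M : Structure L A, Models M T ↔ Models M Sig),
     (∃ Sig : Set (Formula L), (∀ σ ∈ Sig, IsPP σ ∧ σ.IsSentence) ∧
        ∀ M : Structure L A, Models M T ↔ Models M Sig)].TFAE := by
  tfae_have 1 → 2 := fun ⟨hweak, hhom⟩ =>
    ⟨fun I _ Ms hMs => WeakProdData.toStructure_ofDirProd Ms ▸ hweak I Ms hMs _, hhom⟩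
  tfae_have 2 → 3 := fun ⟨hprod, hhom⟩ => exists_wprimitive_axiomatization hprod hhom hcons
  tfae_have 3 → 5 := fun ⟨Sig, hSig, hT⟩ => ⟨Sig, fun σ hσ => (hSig σ hσ).imp_left (·.isPP), hT⟩
  tfae_have 4 → 5 := fun ⟨Sig, hSig, hT⟩ => ⟨Sig, fun σ hσ => (hSig σ hσ).imp_left (·.isPP), hT⟩
  tfae_have 5 → 4 := fun ⟨Sig, hSig, hT⟩ => by
    refine ⟨Formula.wconjToSconj '' Sig, ?_, fun M => (hT M).trans ?_⟩
    · rintro _ ⟨σ, hσ, rfl⟩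
      exact ⟨(hSig σ hσ).1.isSPrimitive_wconjToSconj, (hSig σ hσ).2.wconjToSconj⟩
    · simp only [Models, Set.forall_mem_image]
      exact forall₂_congr fun σ hσ => (hSig σ hσ).1.valid_wconjToSconj_iff.symm
  tfae_have 5 → 1 := fun ⟨Sig, hSig, hT⟩ => by
    simp only [hT]
    exact ⟨fun I _ Ms hMs W σ hσ => W.valid_of_isPP (hSig σ hσ).1 fun i => hMs i σ hσ,
      fun M N g hg hM σ hσ => hg.valid_of_isPP (hSig σ hσ).1 (hSig σ hσ).2 (hM σ hσ)⟩
  tfae_finish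

/-- **Corollary: five-way characterization.**  For a consistent theory `T`,
the following are equivalent: closure under weak `A`-direct products and
homomorphisms; closure under `A`-direct products and homomorphisms;
axiomatizability by ∧-primitive sentences; by &-primitive sentences; and by
positive-primitive (∧&-primitive) sentences. -/
theorem pp_axiomatization_tfae {A : Type u} [MTLChain A] {L : Lang.{u}}
    (T : Set (Formula L)) (hsent : ∀ σ ∈ T, σ.IsSentence)
    (hcons : ∃ M : Structure L A, Models M T) :
    [((∀ (I : Type u) [Nonempty I] (Ms : I → Structure L A),
          (∀ i, Models (Ms i) T) → ∀ W : WeakProdData Ms, Models W.toStructure T) ∧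
       (∀ (M N : Structure L A) (g : M.Dom → N.Dom),
          IsHom M N g → Models M T → Models N T)),
     ((∀ (I : Type u) [Nonempty I] (Ms : I → Structure L A),
          (∀ i, Models (Ms i) T) → Models (dirProd Ms) T) ∧
       (∀ (M N : Structure L A) (g : M.Dom → N.Dom),
          IsHom M N g → Models M T → Models N T)),
     (∃ Sig : Set (Formula L), (∀ σ ∈ Sig, IsWPrimitive σ ∧ σ.IsSentence) ∧
        ∀ M : Structure L A, Models M T ↔ Models M Sig),
     (∃ Sig : Set (Formula L), (∀ σ ∈ Sig, IsSPrimitive σ ∧ σ.IsSentence) ∧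
        ∀ M : Structure L A, Models M T ↔ Models M Sig),
     (∃ Sig : Set (Formula L), (∀ σ ∈ Sig, IsPP σ ∧ σ.IsSentence) ∧
        ∀ M : Structure L A, Models M T ↔ Models M Sig)].TFAE :=
  pp_axiomatization_tfae_general T hcons
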